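/- Let V be an orthogonal geometry over a field F of characteristic ≠ 2, with symmetric bilinear form S and quadratic form q. If v, w ∈ V satisfy q(v) = q(w) ≠ 0, then q(v−w) ≠ 0 or q(v+w) ≠ 0. Moreover, if q(v−w) ≠ 0 then r_{v−w}(v) = w, and if q(v+w) ≠ 0 then r_w(r_{v+w}(v)) = w. -/
import Mathlib


/-- Lemma on reflections: if `q v = q w ≠ 0` then `q (v-w) ≠ 0` or `q (v+w) ≠ 0`;
in the first case `r_{v-w} v = w`, in the second `r_w (r_{v+w} v) = w`. -/
theorem stmt_0 {F : Type*} [Field F] (hchar : (2 : F) ≠ 0)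
    {V : Type*} [AddCommGroup V] [Module F V] [FiniteDimensional F V]
    (S : LinearMap.BilinForm F V) (hS : ∀ x y, S x y = S y x)
    (v w : V) (hvw : S v v = S w w) (hv : S v v ≠ 0) :
    (S (v - w) (v - w) ≠ 0 ∨ S (v + w) (v + w) ≠ 0) ∧
    (S (v - w) (v - w) ≠ 0 →
      v - ((2 * S v (v - w)) / S (v - w) (v - w)) • (v - w) = w) ∧
    (S (v + w) (v + w) ≠ 0 →
      (v - ((2 * S v (v + w)) / S (v + w) (v + w)) • (v + w)) -
        ((2 * S (v - ((2 * S v (v + w)) / S (v + w) (v + w)) • (v + w)) w) / S w w) • w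
        = w) := by
  have hwv : S w v = S v w := hS w v
  have h1 : S (v - w) (v - w) = 2 * (S v v - S v w) := by
    simp only [map_sub, LinearMap.sub_apply]
    rw [hwv, ← hvw]; ring
  have h2 : S (v + w) (v + w) = 2 * (S v v + S v w) := by
    simp only [map_add, LinearMap.add_apply]
    rw [hwv, ← hvw]; ring
  have hvm : S v (v - w) = S v v - S v w := by simp
  have hvp : S v (v + w) = S v v + S v w := by simp
  refine ⟨?_, ?_, ?_⟩
  · by_contra h
    push_neg at h
    obtain ⟨e1, e2⟩ := h
    rw [h1] at e1; rw [h2] at e2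
    have : (2 : F) * (2 * S v v) = 0 := by
      have := congrArg₂ (· + ·) e1 e2
      simp at this
      linear_combination this
    rcases mul_eq_zero.1 this with h | h
    · exact hchar h
    · rcases mul_eq_zero.1 h with h | h
      · exact hchar h
      · exact hv h
  · intro hne
    have hd : S v v - S v w ≠ 0 := by
      rw [h1] at hne
      exact fun h => hne (by rw [h, mul_zero])
    rw [h1, hvm]
    rw [show 2 * (S v v - S v w) / (2 * (S v v - S v w)) = 1 from
      div_self (mul_ne_zero hchar hd)]
    module
  · intro hne
    have hd : S v v + S v w ≠ 0 := by
      rw [h2] at hne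
      exact fun h => hne (by rw [h, mul_zero])
    rw [h2, hvp]
    rw [show 2 * (S v v + S v w) / (2 * (S v v + S v w)) = 1 from
      div_self (mul_ne_zero hchar hd)]
    have hinner : v - (1 : F) • (v + w) = -w := by module
    rw [hinner]
    have hSw : S (-w) w = -(S v v) := by rw [map_neg, LinearMap.neg_apply, hvw]
    rw [hSw]
    have hww : S w w ≠ 0 := hvw ▸ hv
    rw [show 2 * -(S v v) / S w w = -2 from by
      rw [← hvw]; field_simp]
    module
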